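/- arXiv:math-ph/0202018 — 3 statements merged into one kernel-verified Lean document; each statement's English description precedes it below -/
import Mathlib

section
/- For all real t ≤ 0 and all α, β ∈ ℝ with cos β ≥ cos α, one has | (t − e^{iα})/(t − e^{iβ}) | ≤ exp( t (cos β − cos α)/(1 − t)² ). -/
/-!
For real `t`, `|t - e^{iθ}|² = t² + 1 - 2t cos θ`, so the squares of numerator `A` and
denominator `B` differ by `d = 2t (cos β - cos α) ≤ 0`. Hence `A²/B² = 1 + d/B² ≤ 1 + d/(1 - t)²`,
because `B ≤ |t| + 1 = 1 - t`, and `1 + x ≤ eˣ` finishes after taking square roots.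
-/

open Complex Real

theorem norm_ofReal_sub_exp_I_mul_sq (t θ : ℝ) :
    ‖(t : ℂ) - exp (I * θ)‖ ^ 2 = t ^ 2 + 1 - 2 * t * Real.cos θ := by
  rw [Complex.sq_norm, normSq_apply, mul_comm I, exp_mul_I]
  simp only [← ofReal_cos, ← ofReal_sin, sub_re, sub_im, add_re, add_im, mul_re, mul_im,
    ofReal_re, ofReal_im, I_re, I_im]
  nlinarith [Real.sin_sq_add_cos_sq θ]

theorem norm_ofReal_sub_exp_I_mul_le (t θ : ℝ) :
    ‖(t : ℂ) - exp (I * θ)‖ ≤ |t| + 1 := by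
  simpa [norm_exp_I_mul_ofReal] using norm_sub_le (t : ℂ) (exp (I * θ))

theorem div_le_exp_of_sq_eq_sq_add {A B M d : ℝ} (hA : 0 ≤ A) (hB : 0 ≤ B) (hBM : B ≤ M)
    (hd : d ≤ 0) (h : A ^ 2 = B ^ 2 + d) : A / B ≤ Real.exp (d / (2 * M ^ 2)) := by
  rcases hB.eq_or_lt with rfl | hB
  · simpa using (Real.exp_pos _).le
  have hsq : (A / B) ^ 2 ≤ Real.exp (d / (2 * M ^ 2)) ^ 2 :=
    calc (A / B) ^ 2 = 1 + d / B ^ 2 := by rw [div_pow, h]; field_simp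
      _ ≤ 1 + d / M ^ 2 := by
        simp only [div_eq_mul_inv]
        gcongr 1 + ?_
        exact mul_le_mul_of_nonpos_left (inv_anti₀ (by positivity) (by gcongr)) hd
      _ ≤ Real.exp (d / M ^ 2) := by linarith [Real.add_one_le_exp (d / M ^ 2)]
      _ = Real.exp (d / (2 * M ^ 2)) ^ 2 := by rw [← Real.exp_nat_mul]; ring_nf
  exact (pow_le_pow_iff_left₀ (by positivity) (Real.exp_pos _).le two_ne_zero).1 hsq

/-- Pointwise bound on the negative real axis: for `t ≤ 0` and `cos β ≥ cos α`,
`|(t - e^{iα})/(t - e^{iβ})| ≤ exp(t (cos β - cos α)/(1 - t)²)`. -/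
theorem ratio_pointwise_bound (t : ℝ) (ht : t ≤ 0) (α β : ℝ)
    (hcos : Real.cos α ≤ Real.cos β) :
    ‖(((t : ℂ) - Complex.exp (Complex.I * α)) / ((t : ℂ) - Complex.exp (Complex.I * β)))‖
      ≤ Real.exp (t * (Real.cos β - Real.cos α) / (1 - t) ^ 2) := by
  have hβ : ‖(t : ℂ) - exp (I * β)‖ ≤ 1 - t := by
    simpa only [abs_of_nonpos ht, neg_add_eq_sub] using norm_ofReal_sub_exp_I_mul_le t β
  have hsq : ‖(t : ℂ) - exp (I * α)‖ ^ 2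
      = ‖(t : ℂ) - exp (I * β)‖ ^ 2 + 2 * t * (Real.cos β - Real.cos α) := by
    rw [norm_ofReal_sub_exp_I_mul_sq, norm_ofReal_sub_exp_I_mul_sq]; ring
  rw [norm_div]
  convert div_le_exp_of_sq_eq_sq_add (norm_nonneg _) (norm_nonneg _) hβ
    (mul_nonpos_of_nonpos_of_nonneg (by linarith) (sub_nonneg.2 hcos)) hsq using 2
  field_simp
end

section
/- For every δ ∈ (0, 1) there exist constants C > 0 and c > 0 such that for all real N ≥ 4: ∫_{−√N}^{−1/√N} exp( t (N − 2) / ( t² + 1 − 2t(1−δ) ) ) dt ≤ C · e^{−c √N}. -/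
open Real MeasureTheory intervalIntegral

/-- The contribution of the intermediate range `-√N ≤ t ≤ -1/√N` is exponentially small:
for every `δ ∈ (0,1)` there are `C > 0` and `c > 0` such that for all `N ≥ 4`,
`∫_{-√N}^{-1/√N} exp(t (N-2)/(t² + 1 - 2t(1-δ))) dt ≤ C e^{-c √N}`. -/
theorem intermediate_range_negligible (δ : ℝ) (hδ0 : 0 < δ) (hδ1 : δ < 1) :
    ∃ C > (0 : ℝ), ∃ c > (0 : ℝ), ∀ N : ℝ, 4 ≤ N →
      (∫ t in (-Real.sqrt N)..(-1 / Real.sqrt N),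
          Real.exp (t * (N - 2) / (t ^ 2 + 1 - 2 * t * (1 - δ))))
        ≤ C * Real.exp (-c * Real.sqrt N) := by
  refine ⟨16, by norm_num, 1/16, by norm_num, fun N hN => ?_⟩
  have hN0 : (0:ℝ) < N := by linarith
  have hs2 : (2:ℝ) ≤ Real.sqrt N := by
    have h4 : Real.sqrt 4 ≤ Real.sqrt N := Real.sqrt_le_sqrt hN
    have : Real.sqrt 4 = 2 := by
      rw [show (4:ℝ) = 2^2 by norm_num, Real.sqrt_sq (by norm_num)]
    linarith
  have hs0 : (0:ℝ) < Real.sqrt N := by linarith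
  have hsq : Real.sqrt N * Real.sqrt N = N := Real.mul_self_sqrt hN0.le
  set a := -Real.sqrt N with ha
  set b := -1 / Real.sqrt N with hb
  have hab : a ≤ b := by
    rw [ha, hb, neg_div, neg_le_neg_iff, div_le_iff₀ hs0]
    nlinarith
  have hDpos : ∀ t : ℝ, 0 < t ^ 2 + 1 - 2 * t * (1 - δ) := by
    intro t
    nlinarith [sq_nonneg (t - (1 - δ)), sq_nonneg t]
  have hcont : Continuous (fun t : ℝ => Real.exp (t * (N - 2) / (t ^ 2 + 1 - 2 * t * (1 - δ)))) := by
    apply Real.continuous_exp.comp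
    exact Continuous.div (by continuity) (by continuity) (fun t => (hDpos t).ne')
  have hbound : ∀ t ∈ Set.Icc a b,
      Real.exp (t * (N - 2) / (t ^ 2 + 1 - 2 * t * (1 - δ))) ≤ Real.exp (-(Real.sqrt N) / 8) := by
    intro t ht
    apply Real.exp_le_exp.mpr
    have hD := hDpos t
    rw [div_le_iff₀ hD]
    have ht1 : -Real.sqrt N ≤ t := ht.1
    have ht2 : t ≤ -1 / Real.sqrt N := ht.2
    have htneg : t < 0 := lt_of_le_of_lt ht2 (by
      rw [neg_div]; exact neg_neg_of_pos (by positivity))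
    have h1 : t * Real.sqrt N ≤ -1 := by
      calc t * Real.sqrt N ≤ (-1 / Real.sqrt N) * Real.sqrt N := by
            exact mul_le_mul_of_nonneg_right ht2 hs0.le
        _ = -1 := by field_simp
    have h2 : 0 ≤ Real.sqrt N + t := by linarith
    have h3 : 0 ≤ δ * (-t) * Real.sqrt N := by
      apply mul_nonneg (mul_nonneg hδ0.le (by linarith)) hs0.le
    nlinarith [mul_nonneg h2 (neg_nonneg.2 htneg.le), sq_nonneg t,
      mul_nonneg (mul_nonneg h2 (neg_nonneg.2 htneg.le)) hs0.le]
  have hint : (∫ t in a..b, Real.exp (t * (N - 2) / (t ^ 2 + 1 - 2 * t * (1 - δ))))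
      ≤ (b - a) * Real.exp (-(Real.sqrt N) / 8) := by
    have h := intervalIntegral.integral_mono_on hab
      (hcont.intervalIntegrable a b)
      ((intervalIntegrable_const : IntervalIntegrable (fun _ => Real.exp (-(Real.sqrt N) / 8)) volume a b)) hbound
    simpa [intervalIntegral.integral_const, smul_eq_mul] using h
  have hba : b - a ≤ Real.sqrt N := by
    rw [ha, hb]
    have : 0 < 1 / Real.sqrt N := by positivity
    have h1 : -1 / Real.sqrt N = -(1 / Real.sqrt N) := by ring
    linarith [this]
  calc (∫ t in a..b, Real.exp (t * (N - 2) / (t ^ 2 + 1 - 2 * t * (1 - δ))))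
      ≤ (b - a) * Real.exp (-(Real.sqrt N) / 8) := hint
    _ ≤ Real.sqrt N * Real.exp (-(Real.sqrt N) / 8) := by
        apply mul_le_mul_of_nonneg_right hba (Real.exp_pos _).le
    _ ≤ 16 * Real.exp (-(1/16) * Real.sqrt N) := by
        have hx : Real.sqrt N ≤ 16 * Real.exp (Real.sqrt N / 16) := by
          have := Real.add_one_le_exp (Real.sqrt N / 16)
          nlinarith [Real.exp_pos (Real.sqrt N / 16)]
        calc Real.sqrt N * Real.exp (-(Real.sqrt N) / 8)
            ≤ (16 * Real.exp (Real.sqrt N / 16)) * Real.exp (-(Real.sqrt N) / 8) := by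
              apply mul_le_mul_of_nonneg_right hx (Real.exp_pos _).le
          _ = 16 * Real.exp (-(1/16) * Real.sqrt N) := by
              rw [mul_assoc, ← Real.exp_add]; ring_nf
end

section
/- For all constants K > 0 and M > 0 there exists C > 0 with the following property: for every real N ≥ 1, every complex number d with |d| ≤ K·N, and every measurable function E : [−N^{−1/2}, 0] → ℂ with |E(t)| ≤ M·N·|t|³ for all t ∈ [−N^{−1/2}, 0], one has | ∫_{−N^{−1/2}}^{0} exp( N t + d t²/2 + E(t) ) dt − ( 1/N + d/N³ ) | ≤ C/N³. -/
open Complex Real MeasureTheory intervalIntegral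
open scoped Nat

/-!
Write the integrand as `e^{Nt} e^{z(t)}` with `z = d t² / 2 + E`. On `[-N^{-1/2}, 0]` we have
`N t² ≤ 1`, hence `‖z‖ ≤ (K/2 + M) N t² ≤ K/2 + M`, and the Taylor bound
`‖e^z - 1 - z‖ ≤ ‖z‖² e^{‖z‖}` gives `e^{z} = 1 + d t²/2 + O(N² t⁴ + N |t|³)` uniformly.
The main part `e^{Nt} (1 + d t²/2)` has an explicit primitive, whose value at `0` is
`1/N + d/N³` and whose value at `-N^{-1/2}` carries the factor `e^{-√N} ≤ 24/N²`.
The remainder is `O(N^{-3})` because `∫_{-∞}^0 e^{Nt} |t|^k dt = k!/N^{k+1}`.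
-/

lemma exp_neg_le_factorial_div_pow {x : ℝ} (hx : 0 < x) (n : ℕ) : rexp (-x) ≤ n ! / x ^ n := by
  rw [Real.exp_neg, ← inv_div]
  exact inv_anti₀ (by positivity) (Real.pow_div_factorial_le_exp _ hx.le n)

lemma norm_cexp_sub_one_sub_le (z : ℂ) : ‖cexp z - 1 - z‖ ≤ ‖z‖ ^ 2 * rexp ‖z‖ := by
  simpa [Finset.sum_range_succ, sub_sub] using norm_exp_sub_sum_le_norm_mul_exp z 2

lemma norm_cexp_add_sub_le (w z e : ℂ) :
    ‖cexp (w + z + e) - cexp w * (1 + z)‖ ≤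
      ‖cexp w‖ * (‖z + e‖ ^ 2 * rexp ‖z + e‖ + ‖e‖) := by
  have h : cexp (w + z + e) - cexp w * (1 + z) =
      cexp w * ((cexp (z + e) - 1 - (z + e)) + e) := by
    rw [add_assoc, Complex.exp_add]; ring
  rw [h, norm_mul]
  gcongr
  exact (norm_add_le _ _).trans (by gcongr; exact norm_cexp_sub_one_sub_le _)

lemma integral_neg_pow_mul_exp_le {a N : ℝ} (ha : a ≤ 0) (hN : 0 < N) (k : ℕ) :
    ∫ t in a..0, (-t) ^ k * rexp (N * t) ≤ k ! / N ^ (k + 1) := by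
  have h := intervalIntegral_pow_mul_exp_neg_le (k := k) (neg_nonneg.2 ha) hN
  rw [← neg_zero, ← integral_comp_neg] at h
  simpa only [mul_neg, neg_neg] using h

section RemainderIntegral

variable {F : Type*} [NormedAddCommGroup F] {g : ℝ → F} {a N α β : ℝ}

lemma intervalIntegrable_of_norm_le_pow_mul_exp (hg : AEStronglyMeasurable g)
    (hle : ∀ t ∈ Set.Icc a 0,
      ‖g t‖ ≤ (α * N ^ 2 * (-t) ^ 4 + β * N * (-t) ^ 3) * rexp (N * t))
    (ha : a ≤ 0) : IntervalIntegrable g volume a 0 := by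
  refine IntervalIntegrable.mono_fun'
    (g := fun t => (α * N ^ 2 * (-t) ^ 4 + β * N * (-t) ^ 3) * rexp (N * t))
    (Continuous.intervalIntegrable (by fun_prop) _ _) hg.restrict ?_
  rw [Set.uIoc_of_le ha]
  filter_upwards [ae_restrict_mem measurableSet_Ioc] with t ht
  exact hle t (Set.Ioc_subset_Icc_self ht)

lemma norm_integral_le_of_norm_le_pow_mul_exp [NormedSpace ℝ F]
    (hle : ∀ t ∈ Set.Icc a 0,
      ‖g t‖ ≤ (α * N ^ 2 * (-t) ^ 4 + β * N * (-t) ^ 3) * rexp (N * t))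
    (ha : a ≤ 0) (hN : 0 < N) (hα : 0 ≤ α) (hβ : 0 ≤ β) :
    ‖∫ t in a..0, g t‖ ≤ (24 * α + 6 * β) / N ^ 3 := by
  have hi : ∀ k : ℕ, IntervalIntegrable (fun t => (-t) ^ k * rexp (N * t)) volume a 0 :=
    fun k => Continuous.intervalIntegrable (by fun_prop) _ _
  calc ‖∫ t in a..0, g t‖
      ≤ ∫ t in a..0, (α * N ^ 2 * (-t) ^ 4 + β * N * (-t) ^ 3) * rexp (N * t) :=
        norm_integral_le_of_norm_le ha
          (ae_of_all _ fun t ht => hle t (Set.Ioc_subset_Icc_self ht))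
          (Continuous.intervalIntegrable (by fun_prop) _ _)
    _ = α * N ^ 2 * (∫ t in a..0, (-t) ^ 4 * rexp (N * t))
          + β * N * ∫ t in a..0, (-t) ^ 3 * rexp (N * t) := by
        rw [← intervalIntegral.integral_const_mul, ← intervalIntegral.integral_const_mul,
          ← integral_add ((hi 4).const_mul _) ((hi 3).const_mul _)]
        congr 1 with t
        ring
    _ ≤ α * N ^ 2 * (4 ! / N ^ 5) + β * N * (3 ! / N ^ 4) := by
        gcongr <;> exact integral_neg_pow_mul_exp_le ha hN _
    _ = (24 * α + 6 * β) / N ^ 3 := by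
        simp only [Nat.factorial]; field_simp; ring

end RemainderIntegral

section MainTerm

noncomputable def laplacePrimitive (w d : ℂ) (t : ℝ) : ℂ :=
  cexp (w * t) * (1 / w + d * ((w * t - 1) ^ 2 + 1) / (2 * w ^ 3))

variable {w : ℂ} (d : ℂ)

lemma hasDerivAt_laplacePrimitive (hw : w ≠ 0) (x : ℝ) :
    HasDerivAt (laplacePrimitive w d) (cexp (w * x) * (1 + d * (x : ℂ) ^ 2 / 2)) x := by
  have hlin := (hasDerivAt_id' (x : ℂ)).const_mul w
  have h := hlin.cexp.mul ((((hlin.sub_const 1).fun_pow 2).add_const 1).const_mul d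
    |>.div_const (2 * w ^ 3) |>.const_add (1 / w))
  refine (h.congr_deriv ?_).comp_ofReal
  field_simp
  ring

lemma laplacePrimitive_zero : laplacePrimitive w d 0 = 1 / w + d / w ^ 3 := by
  simp only [laplacePrimitive, ofReal_zero, mul_zero, Complex.exp_zero, one_mul]
  ring

lemma integral_cexp_mul_mul_one_add_sq (hw : w ≠ 0) (a b : ℝ) :
    ∫ t in a..b, cexp (w * t) * (1 + d * (t : ℂ) ^ 2 / 2) =
      laplacePrimitive w d b - laplacePrimitive w d a :=
  integral_eq_sub_of_hasDerivAt (fun x _ => hasDerivAt_laplacePrimitive d hw x)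
    (Continuous.intervalIntegrable (by fun_prop) _ _)

lemma norm_laplacePrimitive_neg_inv_sqrt_le {K N : ℝ} (hN : 1 ≤ N) (hd : ‖d‖ ≤ K * N) :
    ‖laplacePrimitive N d (-1 / √N)‖ ≤ (24 + 60 * K) / N ^ 3 := by
  have hN0 : 0 < N := by linarith
  have hs0 : 0 < √N := Real.sqrt_pos.2 hN0
  have hsN : √N ≤ N := Real.sqrt_le_self_iff.2 (Or.inr hN)
  have hss : √N ^ 2 = N := sq_sqrt hN0.le
  have hK : 0 ≤ K := nonneg_of_mul_nonneg_left ((norm_nonneg d).trans hd) hN0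
  have hNs : N * (-1 / √N) = -√N := by rw [mul_div, mul_neg_one, neg_div, Real.div_sqrt]
  have hexp : rexp (-√N) ≤ 24 / N ^ 2 := by
    have h := exp_neg_le_factorial_div_pow hs0 4
    rwa [show √N ^ 4 = N ^ 2 by rw [show 4 = 2 * 2 from rfl, pow_mul, hss],
      Nat.factorial] at h
  have hpoly : ‖1 / (N : ℂ) + d * ((((-√N : ℝ) : ℂ) - 1) ^ 2 + 1) / (2 * N ^ 3)‖
      ≤ (1 + 5 / 2 * K) / N := by
    have hX : (((-√N : ℝ) : ℂ) - 1) ^ 2 + 1 = (((√N + 1) ^ 2 + 1 : ℝ) : ℂ) := by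
      push_cast; ring
    have hX5 : (√N + 1) ^ 2 + 1 ≤ 5 * N := by nlinarith
    calc _ ≤ 1 / N + ‖d‖ * ((√N + 1) ^ 2 + 1) / (2 * N ^ 3) := by
          refine (norm_add_le _ _).trans_eq ?_
          simp only [hX, norm_div, norm_mul, norm_pow, norm_one, Complex.norm_real,
            Complex.norm_ofNat, Real.norm_of_nonneg hN0.le,
            Real.norm_of_nonneg (by positivity : (0 : ℝ) ≤ (√N + 1) ^ 2 + 1)]
      _ ≤ 1 / N + K * N * (5 * N) / (2 * N ^ 3) := by gcongr
      _ = (1 + 5 / 2 * K) / N := by field_simp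
  rw [laplacePrimitive, ← Complex.ofReal_mul, hNs, norm_mul, Complex.norm_exp_ofReal]
  calc rexp (-√N) * _ ≤ 24 / N ^ 2 * ((1 + 5 / 2 * K) / N) := by gcongr
    _ = (24 + 60 * K) / N ^ 3 := by field_simp; ring

end MainTerm

lemma norm_laplace_integrand_sub_le {K M N : ℝ} (hN : 1 ≤ N) (hM : 0 ≤ M) {d : ℂ}
    (hd : ‖d‖ ≤ K * N) {t : ℝ} (ht : t ∈ Set.Icc (-1 / √N) 0) {e : ℂ}
    (he : ‖e‖ ≤ M * N * |t| ^ 3) :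
    ‖cexp (N * t + d * (t : ℂ) ^ 2 / 2 + e) - cexp (N * t) * (1 + d * (t : ℂ) ^ 2 / 2)‖ ≤
      ((K / 2 + M) ^ 2 * rexp (K / 2 + M) * N ^ 2 * (-t) ^ 4 + M * N * (-t) ^ 3) *
        rexp (N * t) := by
  have hN0 : 0 < N := by linarith
  have hK : 0 ≤ K := nonneg_of_mul_nonneg_left ((norm_nonneg d).trans hd) hN0
  have habs : |t| = -t := abs_of_nonpos ht.2
  have hNt : N * t ^ 2 ≤ 1 := by
    have h : -t ≤ 1 / √N := by have := ht.1; rw [neg_div] at this; linarith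
    calc N * t ^ 2 = N * (-t) ^ 2 := by ring
      _ ≤ N * (1 / √N) ^ 2 := by gcongr; linarith [ht.2]
      _ = 1 := by rw [div_pow, sq_sqrt hN0.le]; field_simp
  have ht1 : -t ≤ 1 := by nlinarith
  have hz : ‖d * (t : ℂ) ^ 2 / 2 + e‖ ≤ (K / 2 + M) * (N * t ^ 2) := by
    have he' : ‖e‖ ≤ M * N * t ^ 2 := by
      calc ‖e‖ ≤ M * N * ((-t) * t ^ 2) := by rw [habs] at he; linarith
        _ ≤ M * N * (1 * t ^ 2) := by gcongr
        _ = M * N * t ^ 2 := by ring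
    calc _ ≤ ‖d‖ * t ^ 2 / 2 + ‖e‖ := (norm_add_le _ _).trans_eq (by simp)
      _ ≤ K * N * t ^ 2 / 2 + M * N * t ^ 2 := by gcongr
      _ = (K / 2 + M) * (N * t ^ 2) := by ring
  have hzB : ‖d * (t : ℂ) ^ 2 / 2 + e‖ ≤ K / 2 + M := hz.trans (by nlinarith)
  refine (norm_cexp_add_sub_le _ _ _).trans ?_
  rw [← Complex.ofReal_mul, Complex.norm_exp_ofReal, mul_comm (rexp _)]
  refine mul_le_mul_of_nonneg_right ?_ (exp_pos _).le
  calc _ ≤ ((K / 2 + M) * (N * t ^ 2)) ^ 2 * rexp (K / 2 + M) + M * N * (-t) ^ 3 := by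
        gcongr
        rwa [habs] at he
    _ = _ := by ring

/-- Laplace-type lemma for the near-origin contribution: for all `K, M > 0` there is
`C > 0` such that for all `N ≥ 1`, all `d : ℂ` with `|d| ≤ K N`, and every measurable
`E` with `|E(t)| ≤ M N |t|³` on `[-1/√N, 0]`,
`| ∫_{-1/√N}^0 exp(N t + d t²/2 + E(t)) dt - (1/N + d/N³) | ≤ C/N³`. -/
theorem laplace_near_origin (K M : ℝ) (hK : 0 < K) (hM : 0 < M) :
    ∃ C > (0 : ℝ), ∀ (N : ℝ), 1 ≤ N → ∀ (d : ℂ), ‖d‖ ≤ K * N →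
      ∀ E : ℝ → ℂ, Measurable E →
        (∀ t ∈ Set.Icc (-1 / Real.sqrt N) (0 : ℝ), ‖E t‖ ≤ M * N * |t| ^ 3) →
        ‖
            ((∫ t in (-1 / Real.sqrt N)..(0 : ℝ),
                Complex.exp ((N : ℂ) * t + d * (t : ℂ) ^ 2 / 2 + E t))
              - (1 / (N : ℂ) + d / (N : ℂ) ^ 3))‖
          ≤ C / N ^ 3 := by
  set c := (K / 2 + M) ^ 2 * rexp (K / 2 + M)
  refine ⟨(24 + 60 * K) + (24 * c + 6 * M), by positivity, fun N hN d hd E hE hEb => ?_⟩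
  have hN0 : 0 < N := by linarith
  have ha : -1 / √N ≤ 0 := div_nonpos_of_nonpos_of_nonneg (by norm_num) (sqrt_nonneg N)
  set f := fun t : ℝ => cexp (N * t + d * (t : ℂ) ^ 2 / 2 + E t)
  set m := fun t : ℝ => cexp (N * t) * (1 + d * (t : ℂ) ^ 2 / 2)
  have hle : ∀ t ∈ Set.Icc (-1 / √N) 0,
      ‖f t - m t‖ ≤ (c * N ^ 2 * (-t) ^ 4 + M * N * (-t) ^ 3) * rexp (N * t) :=
    fun t ht => norm_laplace_integrand_sub_le hN hM.le hd ht (hEb t ht)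
  have hrem : IntervalIntegrable (fun t => f t - m t) volume (-1 / √N) 0 :=
    intervalIntegrable_of_norm_le_pow_mul_exp (by fun_prop) hle ha
  have hsplit : ∫ t in (-1 / √N)..0, f t =
      (∫ t in (-1 / √N)..0, f t - m t) + ∫ t in (-1 / √N)..0, m t := by
    rw [← integral_add hrem (Continuous.intervalIntegrable (by fun_prop) _ _)]
    simp only [sub_add_cancel]
  rw [hsplit, integral_cexp_mul_mul_one_add_sq d (ofReal_ne_zero.2 hN0.ne'),
    laplacePrimitive_zero]
  calc _ = ‖(∫ t in (-1 / √N)..0, f t - m t) - laplacePrimitive N d (-1 / √N)‖ := by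
        congr 1; ring
    _ ≤ ‖∫ t in (-1 / √N)..0, f t - m t‖ + ‖laplacePrimitive N d (-1 / √N)‖ :=
        norm_sub_le _ _
    _ ≤ (24 * c + 6 * M) / N ^ 3 + (24 + 60 * K) / N ^ 3 :=
        add_le_add (norm_integral_le_of_norm_le_pow_mul_exp hle ha hN0 (by positivity) hM.le)
          (norm_laplacePrimitive_neg_inv_sqrt_le d hN hd)
    _ = _ := by ring
end
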